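/- Every window of the lattice α-helix of length N ≥ 5 satisfies Φ = 1; that is, for every 3 ≤ i ≤ N−2, the 5-tuple (H(i−2),…,H(i+2)) or its reversal is equivalent, by a lattice rotation and translation, to conformation 1 or to conformation 2. Consequently the α-helix is a minimal conformation with E₅ = −(N−4). -/

import Mathlib

/-- Points of the cubic lattice `ℤ³`. -/
abbrev P3 : Type := Fin 3 → ℤ

def e1 : P3 := ![1, 0, 0]
def e2 : P3 := ![0, 1, 0]
def e3 : P3 := ![0, 0, 1]

/-- Squared Euclidean norm of an integer vector; it equals `1` iff the
Euclidean norm equals `1`. -/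
def sqNorm (v : P3) : ℤ := ∑ k, (v k) ^ 2

/-- A conformation of length `N`: an injective map on `{1, …, N}` whose
consecutive steps have Euclidean length one. -/
def IsConformation (N : ℕ) (Γ : ℕ → P3) : Prop :=
  Set.InjOn Γ (Set.Icc 1 N) ∧ ∀ i, 1 ≤ i → i < N → sqNorm (Γ (i + 1) - Γ i) = 1

/-- A lattice rotation: an orthogonal integer matrix of determinant one
(equivalently, a linear isometry of `ℝ³` mapping `ℤ³` onto `ℤ³` with
determinant one). -/
def IsLatticeRotation (R : Matrix (Fin 3) (Fin 3) ℤ) : Prop :=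
  R.transpose * R = 1 ∧ R.det = 1

/-- Equivalence of length-5 conformations: `Δ' k = R (Δ k) + t` for a lattice
rotation `R` and translation `t ∈ ℤ³`. -/
def Equiv5 (Δ Δ' : Fin 5 → P3) : Prop :=
  ∃ (R : Matrix (Fin 3) (Fin 3) ℤ) (t : P3),
    IsLatticeRotation R ∧ ∀ k, Δ' k = R.mulVec (Δ k) + t

/-- Reversal of a length-5 conformation (`k ↦ Δ (6 - k)` in 1-based indexing). -/
def rev5 (Δ : Fin 5 → P3) : Fin 5 → P3 := fun k => Δ k.rev

/-- Conformation 1: vertices (0,0,0), (1,0,0), (1,1,0), (0,1,0), (0,1,1). -/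
def conf1 : Fin 5 → P3 := ![![0, 0, 0], ![1, 0, 0], ![1, 1, 0], ![0, 1, 0], ![0, 1, 1]]

/-- Conformation 2: vertices (0,0,0), (0,1,0), (−1,1,0), (−1,1,1), (−1,0,1). -/
def conf2 : Fin 5 → P3 := ![![0, 0, 0], ![0, 1, 0], ![-1, 1, 0], ![-1, 1, 1], ![-1, 0, 1]]

/-- The `i`-th window of `Γ`: the 5-tuple `(Γ(i-2), …, Γ(i+2))`. -/
def window (Γ : ℕ → P3) (i : ℕ) : Fin 5 → P3 := fun k => Γ (i - 2 + (k : ℕ))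

/-- `Φ(Δ) = 1`: the 5-tuple `Δ` or its reversal is equivalent to
conformation 1 or to conformation 2. -/
def WindowGood (Δ : Fin 5 → P3) : Prop :=
  Equiv5 Δ conf1 ∨ Equiv5 (rev5 Δ) conf1 ∨ Equiv5 Δ conf2 ∨ Equiv5 (rev5 Δ) conf2

open Classical in
/-- The function `Φ` on length-5 conformations. -/
noncomputable def Phi (Δ : Fin 5 → P3) : ℤ := if WindowGood Δ then 1 else 0

/-- The energy `E₅(Γ) = −Σ_{i=3}^{N−2} Φ(Γ_i)`. -/
noncomputable def E5 (N : ℕ) (Γ : ℕ → P3) : ℤ :=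
  -∑ i ∈ Finset.Icc 3 (N - 2), Phi (window Γ i)

/-- A minimal conformation: a conformation all of whose windows satisfy `Φ = 1`. -/
def IsMinimal (N : ℕ) (Γ : ℕ → P3) : Prop :=
  IsConformation N Γ ∧ ∀ i, 3 ≤ i → i ≤ N - 2 → WindowGood (window Γ i)

/-- The walk starting at the origin (in 1-based indexing) whose steps
cyclically repeat the given list. -/
def cyclicWalk (steps : List P3) : ℕ → P3
  | 0 => 0
  | 1 => 0
  | n + 2 => cyclicWalk steps (n + 1) + steps.getD (n % steps.length) 0

/-- The 16-term step sequence of the lattice α-helix. -/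
def alphaStepList : List P3 :=
  [e1, e2, -e1, e3, -e2, e1, e2, e3, -e1, -e2, e1, e3, e2, -e1, -e2, e3]

/-- The 4-term step sequence of the lattice β-strand. -/
def betaStepList : List P3 := [e1, e2, -e1, e3]

/-- The lattice α-helix (`H(1) = 0`, steps cyclically repeating `alphaStepList`). -/
def alphaHelix : ℕ → P3 := cyclicWalk alphaStepList

/-- The lattice β-strand (`B(1) = 0`, steps cyclically repeating `betaStepList`). -/
def betaStrand : ℕ → P3 := cyclicWalk betaStepList

/-- The four directed types of windows. -/
inductive DType : Type
  | r1  -- →1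
  | l1  -- ←1
  | r2  -- →2
  | l2  -- ←2
deriving DecidableEq

/-- A window `Δ` has directed type `→1` (resp. `→2`) if it is equivalent to
conformation 1 (resp. 2), and `←1` (resp. `←2`) if its reversal is. -/
def HasType (Δ : Fin 5 → P3) : DType → Prop
  | DType.r1 => Equiv5 Δ conf1
  | DType.l1 => Equiv5 (rev5 Δ) conf1
  | DType.r2 => Equiv5 Δ conf2
  | DType.l2 => Equiv5 (rev5 Δ) conf2

/-- The six allowed ordered pairs of directed types of consecutive windows:
(→1,←1), (←1,→1), (→1,→2), (→2,←2), (←2,←1), (←2,→2). -/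
def allowedPairs : List (DType × DType) :=
  [(DType.r1, DType.l1), (DType.l1, DType.r1), (DType.r1, DType.r2),
   (DType.r2, DType.l2), (DType.l2, DType.l1), (DType.l2, DType.r2)]

/-- `w` is the type sequence of `Γ` (a conformation of length `N`):
`w` has length `N − 4` and its `j`-th letter is the directed type of the
window `Γ_{3+j}`, `j = 0, …, N−5`. -/
def HasTypeSeq (N : ℕ) (Γ : ℕ → P3) (w : List DType) : Prop :=
  w.length = N - 4 ∧ ∀ j (h : j < w.length), HasType (window Γ (3 + j)) (w.get ⟨j, h⟩)

/-- The word `α = →1→2←2←1`. -/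
def wordAlpha : List DType := [DType.r1, DType.r2, DType.l2, DType.l1]

/-- The word `β = →1←1`. -/
def wordBeta : List DType := [DType.r1, DType.l1]

/-- `v` is a finite concatenation of copies of the words `α` and `β`. -/
def IsABConcat (v : List DType) : Prop :=
  ∃ L : List (List DType), (∀ u ∈ L, u = wordAlpha ∨ u = wordBeta) ∧ v = L.flatten

/-- A word is admissible if it is a contiguous subword (factor) of some finite
concatenation of copies of `α` and `β`. -/
def Admissible (w : List DType) : Prop := ∃ v, IsABConcat v ∧ w <:+: v

/-- The two kinds of monomers. -/
inductive AB : Type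
  | A
  | B
deriving DecidableEq

/-- The number of occurrences of the letter `c` in the `i`-th 5-tuple
`S(i−2), …, S(i+2)` of the sequence `S`. -/
def countLetter (c : AB) (S : ℕ → AB) (i : ℕ) : ℕ :=
  ((Finset.Icc (i - 2) (i + 2)).filter fun k => S k = c).card

open Classical in
/-- `Φ₁(Δ) = 1` iff `Δ` or its reversal is equivalent to conformation 1. -/
noncomputable def Phi1 (Δ : Fin 5 → P3) : ℝ :=
  if Equiv5 Δ conf1 ∨ Equiv5 (rev5 Δ) conf1 then 1 else 0

open Classical in
/-- `Φ₂(Δ) = 1` iff `Δ` or its reversal is equivalent to conformation 2. -/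
noncomputable def Phi2 (Δ : Fin 5 → P3) : ℝ :=
  if Equiv5 Δ conf2 ∨ Equiv5 (rev5 Δ) conf2 then 1 else 0

/-- The heteropolymer energy
`E₅′(S,Γ) = −Σᵢ [#_B(Sᵢ)(Φ₁(Γᵢ) + ε Φ₂(Γᵢ)) + #_A(Sᵢ)(Φ₂(Γᵢ) + ε Φ₁(Γᵢ))]`. -/
noncomputable def E5' (ε : ℝ) (S : ℕ → AB) (N : ℕ) (Γ : ℕ → P3) : ℝ :=
  -∑ i ∈ Finset.Icc 3 (N - 2),
    ((countLetter AB.B S i : ℝ) * (Phi1 (window Γ i) + ε * Phi2 (window Γ i)) +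
      (countLetter AB.A S i : ℝ) * (Phi2 (window Γ i) + ε * Phi1 (window Γ i)))

/-!
The α-helix is invariant under a screw motion: its step sequence is made of four blocks of
four steps, each obtained from the previous one by the quarter turn `(x, y, z) ↦ (y, -x, z)`,
so `H(n + 4)` is that quarter turn applied to `H(n)`, followed by the translation `(0, 1, 1)`.
Hence the window `H_{i+4}` is equivalent to `H_i`, and it suffices to check the four
windows `H_3, …, H_6`, which have the types `→1, →2, ←2, ←1`. The screw motion raises the
height by one every four steps, so `H(n + 1)` has height `n / 4`; together with injectivity
of the screw motion this gives injectivity of `H`.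
-/

open scoped Matrix

namespace IsLatticeRotation

variable {R S : Matrix (Fin 3) (Fin 3) ℤ}

theorem transpose (hR : IsLatticeRotation R) : IsLatticeRotation Rᵀ :=
  ⟨by rw [Matrix.transpose_transpose, mul_eq_one_comm.mp hR.1],
    by rw [Matrix.det_transpose, hR.2]⟩

theorem mul (hR : IsLatticeRotation R) (hS : IsLatticeRotation S) : IsLatticeRotation (R * S) :=
  ⟨by rw [Matrix.transpose_mul, Matrix.mul_assoc, ← Matrix.mul_assoc Rᵀ, hR.1, Matrix.one_mul,
      hS.1],
    by rw [Matrix.det_mul, hR.2, hS.2, mul_one]⟩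

theorem mulVec_injective (hR : IsLatticeRotation R) : Function.Injective (R *ᵥ ·) :=
  fun v w h => by simpa [Matrix.mulVec_mulVec, hR.1] using congrArg (Rᵀ *ᵥ ·) h

end IsLatticeRotation

namespace Equiv5

variable {Δ Δ' Δ'' : Fin 5 → P3}

theorem symm (h : Equiv5 Δ Δ') : Equiv5 Δ' Δ := by
  obtain ⟨R, t, hR, he⟩ := h
  refine ⟨Rᵀ, -(Rᵀ *ᵥ t), hR.transpose, fun k => ?_⟩
  rw [he k, Matrix.mulVec_add, Matrix.mulVec_mulVec, hR.1, Matrix.one_mulVec,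
    add_neg_cancel_right]

theorem trans (h : Equiv5 Δ Δ') (h' : Equiv5 Δ' Δ'') : Equiv5 Δ Δ'' := by
  obtain ⟨R, t, hR, he⟩ := h
  obtain ⟨S, u, hS, he'⟩ := h'
  refine ⟨S * R, S *ᵥ t + u, hS.mul hR, fun k => ?_⟩
  rw [he' k, he k, Matrix.mulVec_add, Matrix.mulVec_mulVec, add_assoc]

theorem rev5 (h : Equiv5 Δ Δ') : Equiv5 (rev5 Δ) (rev5 Δ') :=
  let ⟨R, t, hR, he⟩ := h
  ⟨R, t, hR, fun k => he k.rev⟩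

end Equiv5

theorem WindowGood.of_equiv5 {Δ Δ' : Fin 5 → P3} (h : Equiv5 Δ Δ') (hΔ : WindowGood Δ) :
    WindowGood Δ' := by
  have h' := h.symm
  rcases hΔ with hc | hc | hc | hc
  · exact Or.inl (h'.trans hc)
  · exact Or.inr (Or.inl (h'.rev5.trans hc))
  · exact Or.inr (Or.inr (Or.inl (h'.trans hc)))
  · exact Or.inr (Or.inr (Or.inr (h'.rev5.trans hc)))

theorem WindowGood.of_hasType {Δ : Fin 5 → P3} : ∀ {d : DType}, HasType Δ d → WindowGood Δ
  | .r1, h => Or.inl h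
  | .l1, h => Or.inr (Or.inl h)
  | .r2, h => Or.inr (Or.inr (Or.inl h))
  | .l2, h => Or.inr (Or.inr (Or.inr h))

theorem IsMinimal.E5_eq {N : ℕ} {Γ : ℕ → P3} (hΓ : IsMinimal N Γ) (hN : 4 ≤ N) :
    E5 N Γ = -((N : ℤ) - 4) := by
  have hPhi : ∀ i ∈ Finset.Icc 3 (N - 2), Phi (window Γ i) = 1 := fun i hi =>
    if_pos (hΓ.2 i (Finset.mem_Icc.mp hi).1 (Finset.mem_Icc.mp hi).2)
  rw [E5, Finset.sum_congr rfl hPhi, Finset.sum_const, Nat.card_Icc, nsmul_one]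
  omega

theorem cyclicWalk_add_two (s : List P3) (n : ℕ) :
    cyclicWalk s (n + 2) = cyclicWalk s (n + 1) + s.getD (n % s.length) 0 := rfl

theorem cyclicWalk_add_of_getD {s : List P3} {p : ℕ} (R : Matrix (Fin 3) (Fin 3) ℤ)
    (hR : ∀ m, s.getD ((m + p) % s.length) 0 = R *ᵥ s.getD (m % s.length) 0) (n : ℕ) :
    cyclicWalk s (n + 1 + p) = R *ᵥ cyclicWalk s (n + 1) + cyclicWalk s (p + 1) := by
  induction n with
  | zero => rw [zero_add, add_comm, cyclicWalk, Matrix.mulVec_zero, zero_add]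
  | succ n ih =>
    rw [show n + 1 + 1 + p = n + p + 2 by omega, cyclicWalk_add_two,
      show n + p + 1 = n + 1 + p by omega, ih, hR, cyclicWalk_add_two, Matrix.mulVec_add]
    abel

def helixScrew : Matrix (Fin 3) (Fin 3) ℤ := !![0, 1, 0; -1, 0, 0; 0, 0, 1]

theorem isLatticeRotation_helixScrew : IsLatticeRotation helixScrew := ⟨by decide, by decide⟩

theorem alphaHelix_add_four (n : ℕ) :
    alphaHelix (n + 1 + 4) = helixScrew *ᵥ alphaHelix (n + 1) + ![0, 1, 1] := by
  have hsteps : ∀ r : Fin 16,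
      alphaStepList.getD ((r + 4) % 16) 0 = helixScrew *ᵥ alphaStepList.getD r 0 := by decide
  have hturn : cyclicWalk alphaStepList (4 + 1) = ![0, 1, 1] := by decide
  rw [alphaHelix, cyclicWalk_add_of_getD helixScrew (fun m => ?_) n, hturn]
  simpa only [show alphaStepList.length = 16 from rfl, Nat.mod_add_mod]
    using hsteps ⟨m % 16, Nat.mod_lt _ (by norm_num)⟩

theorem alphaHelix_apply_two (n : ℕ) : alphaHelix (n + 1) 2 = (n / 4 : ℕ) := by
  induction n using Nat.strong_induction_on with
  | _ n ih =>
    obtain hn | hn := lt_or_ge n 4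
    · interval_cases n <;> decide
    obtain ⟨m, rfl⟩ := Nat.exists_eq_add_of_le' hn
    have hm := ih m (by omega)
    rw [alphaHelix_add_four]
    simp [helixScrew, dotProduct, Fin.sum_univ_three, hm]

theorem alphaHelix_injOn : Set.InjOn alphaHelix (Set.Ici 1) := by
  intro a ha b hb hab
  induction a using Nat.strong_induction_on generalizing b with
  | _ a ih =>
    obtain ⟨a, rfl⟩ := Nat.exists_eq_add_of_le' ha
    obtain ⟨b, rfl⟩ := Nat.exists_eq_add_of_le' hb
    have hheight := congrFun hab 2
    rw [alphaHelix_apply_two, alphaHelix_apply_two, Nat.cast_inj] at hheight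
    obtain ha4 | ha4 := lt_or_ge a 4
    · have hb4 : b < 4 := by omega
      interval_cases a <;> interval_cases b <;> first | rfl | exact absurd hab (by decide)
    · obtain ⟨a, rfl⟩ := Nat.exists_eq_add_of_le' ha4
      obtain ⟨b, rfl⟩ := Nat.exists_eq_add_of_le' (show 4 ≤ b by omega)
      rw [show a + 4 + 1 = a + 1 + 4 by omega, show b + 4 + 1 = b + 1 + 4 by omega,
        alphaHelix_add_four, alphaHelix_add_four] at hab
      have hprev := ih (a + 1) (by omega) (by simp) (by simp)
        (isLatticeRotation_helixScrew.mulVec_injective (add_right_cancel hab))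
      omega

theorem alphaHelix_sqNorm_sub (i : ℕ) (hi : 1 ≤ i) :
    sqNorm (alphaHelix (i + 1) - alphaHelix i) = 1 := by
  obtain ⟨m, rfl⟩ := Nat.exists_eq_add_of_le' hi
  have hsteps : ∀ r : Fin 16, sqNorm (alphaStepList.getD r 0) = 1 := by decide
  rw [alphaHelix, cyclicWalk_add_two, add_sub_cancel_left]
  exact hsteps ⟨m % 16, Nat.mod_lt _ (by norm_num)⟩

theorem isConformation_alphaHelix (N : ℕ) : IsConformation N alphaHelix :=
  ⟨alphaHelix_injOn.mono fun _ h => h.1, fun i hi _ => alphaHelix_sqNorm_sub i hi⟩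

theorem equiv5_window_alphaHelix_add_four {i : ℕ} (hi : 3 ≤ i) :
    Equiv5 (window alphaHelix i) (window alphaHelix (i + 4)) := by
  refine ⟨helixScrew, ![0, 1, 1], isLatticeRotation_helixScrew, fun k => ?_⟩
  simp only [window]
  rw [show i + 4 - 2 + (k : ℕ) = i - 3 + k + 1 + 4 by omega, alphaHelix_add_four,
    show i - 3 + (k : ℕ) + 1 = i - 2 + k by omega]

theorem hasType_window_alphaHelix (j : Fin 4) :
    HasType (window alphaHelix (3 + j)) (wordAlpha.get j) := by
  fin_cases j
  · exact ⟨1, 0, ⟨by decide, by decide⟩, by decide⟩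
  · exact ⟨1, ![-1, 0, 0], ⟨by decide, by decide⟩, by decide⟩
  · exact ⟨!![0, -1, 0; -1, 0, 0; 0, 0, -1], ![0, 1, 1], ⟨by decide, by decide⟩, by decide⟩
  · exact ⟨!![0, -1, 0; -1, 0, 0; 0, 0, -1], ![1, 1, 1], ⟨by decide, by decide⟩, by decide⟩

theorem windowGood_window_alphaHelix {i : ℕ} (hi : 3 ≤ i) :
    WindowGood (window alphaHelix i) := by
  induction i using Nat.strong_induction_on with
  | _ i ih =>
    obtain hlt | hge := lt_or_ge i 7
    · obtain ⟨j, rfl⟩ := Nat.exists_eq_add_of_le hi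
      exact .of_hasType (hasType_window_alphaHelix ⟨j, by omega⟩)
    · obtain ⟨m, rfl⟩ := Nat.exists_eq_add_of_le' (show 4 ≤ i by omega)
      exact (ih m (by omega) (by omega)).of_equiv5 (equiv5_window_alphaHelix_add_four (by omega))

/-- Every window of the lattice α-helix of length `N ≥ 5`
satisfies `Φ = 1`; consequently the α-helix is a minimal conformation with
`E₅ = −(N−4)`. -/
theorem alphaHelix_minimal (N : ℕ) (hN : 5 ≤ N) :
    (∀ i, 3 ≤ i → i ≤ N - 2 → WindowGood (window alphaHelix i)) ∧
      IsMinimal N alphaHelix ∧ E5 N alphaHelix = -((N : ℤ) - 4) := by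
  have hwindows : ∀ i, 3 ≤ i → i ≤ N - 2 → WindowGood (window alphaHelix i) :=
    fun _ hi _ => windowGood_window_alphaHelix hi
  have hmin : IsMinimal N alphaHelix := ⟨isConformation_alphaHelix N, hwindows⟩
  exact ⟨hwindows, hmin, hmin.E5_eq (by omega)⟩
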